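/- arXiv:math/0511525 — 5 statements merged into one kernel-verified Lean document; each statement's English description precedes it below -/
import Mathlib

section
/- Let J1, J2, J3 satisfy the quaternionic identities on a vector space V and let S_X(Y) = S⁰_X(Y) + s¹(X)J1Y + s²(X)J2Y + s³(X)J3Y where S⁰_X commutes with each Ja. Then for every unit imaginary combination J = a1J1+a2J2+a3J3 (a1²+a2²+a3²=1) the identity J[S_Y, J] = [S_{JY}, J] holds for all Y if and only if s¹(J1X) = s²(J2X) = s³(J3X) for all X. -/
/-- With `S_X = S⁰_X + s¹(X)J1 + s²(X)J2 + s³(X)J3`, `[S⁰_X, Ja] = 0`, the identity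
`J[S_Y,J] = [S_{JY},J]` holds for all `Y` and all unit imaginary `J = a1J1+a2J2+a3J3`
iff `s¹(J1X) = s²(J2X) = s³(J3X)` for all `X`. -/
theorem stmt_8 {V : Type*} [AddCommGroup V] [Module ℝ V]
    (J1 J2 J3 : Module.End ℝ V)
    (h1 : J1 * J1 = -1) (h2 : J2 * J2 = -1) (h3 : J3 * J3 = -1)
    (h12 : J1 * J2 = J3) (h21 : J2 * J1 = -J3)
    (h23 : J2 * J3 = J1) (h32 : J3 * J2 = -J1)
    (h31 : J3 * J1 = J2) (h13 : J1 * J3 = -J2)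
    (S S0 : V → Module.End ℝ V)
    (s1 s2 s3 : V →ₗ[ℝ] ℝ)
    (hS : ∀ X, S X = S0 X + s1 X • J1 + s2 X • J2 + s3 X • J3)
    (hS0 : ∀ X, S0 X * J1 = J1 * S0 X ∧ S0 X * J2 = J2 * S0 X ∧ S0 X * J3 = J3 * S0 X) :
    (∀ a1 a2 a3 : ℝ, a1 ^ 2 + a2 ^ 2 + a3 ^ 2 = 1 →
      ∀ J : Module.End ℝ V, J = a1 • J1 + a2 • J2 + a3 • J3 →
        ∀ Y : V, J * (S Y * J - J * S Y) = S (J Y) * J - J * S (J Y)) ↔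
    (∀ X : V, s1 (J1 X) = s2 (J2 X) ∧ s2 (J2 X) = s3 (J3 X)) := by
  -- application versions of the quaternion identities
  have j11 : ∀ X : V, J1 (J1 X) = -X := fun X => by
    simpa using DFunLike.congr_fun h1 X
  have j22 : ∀ X : V, J2 (J2 X) = -X := fun X => by
    simpa using DFunLike.congr_fun h2 X
  have j33 : ∀ X : V, J3 (J3 X) = -X := fun X => by
    simpa using DFunLike.congr_fun h3 X
  have j12 : ∀ X : V, J1 (J2 X) = J3 X := fun X => by
    simpa using DFunLike.congr_fun h12 X
  have j21 : ∀ X : V, J2 (J1 X) = -(J3 X) := fun X => by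
    simpa using DFunLike.congr_fun h21 X
  have j23 : ∀ X : V, J2 (J3 X) = J1 X := fun X => by
    simpa using DFunLike.congr_fun h23 X
  have j32 : ∀ X : V, J3 (J2 X) = -(J1 X) := fun X => by
    simpa using DFunLike.congr_fun h32 X
  have j31 : ∀ X : V, J3 (J1 X) = J2 X := fun X => by
    simpa using DFunLike.congr_fun h31 X
  have j13 : ∀ X : V, J1 (J3 X) = -(J2 X) := fun X => by
    simpa using DFunLike.congr_fun h13 X
  -- the general bracket formula
  have brackS : ∀ (a1 a2 a3 : ℝ) (X : V),
      S X * (a1 • J1 + a2 • J2 + a3 • J3) - (a1 • J1 + a2 • J2 + a3 • J3) * S X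
        = (2 * (s2 X * a3 - s3 X * a2)) • J1 + (2 * (s3 X * a1 - s1 X * a3)) • J2
          + (2 * (s1 X * a2 - s2 X * a1)) • J3 := by
    intro a1 a2 a3 X
    obtain ⟨c1, c2, c3⟩ := hS0 X
    rw [hS X]
    simp only [mul_add, add_mul, smul_mul_assoc, mul_smul_comm,
      h1, h2, h3, h12, h21, h23, h32, h31, h13, c1, c2, c3]
    module
  constructor
  · -- forward direction
    intro h X
    rcases subsingleton_or_nontrivial V with hV | hV
    · constructor <;>
        simp [Subsingleton.elim (J1 X) (0 : V), Subsingleton.elim (J2 X) (0 : V),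
          Subsingleton.elim (J3 X) (0 : V)]
    · obtain ⟨v, hv⟩ := exists_ne (0 : V)
      have indep : ∀ (A B C : Module.End ℝ V), A * A = -1 → B * B = -1 →
          A * B = C → B * A = -C → ∀ c d : ℝ, c • A + d • B = 0 → c = 0 ∧ d = 0 := by
        intro A B C hA hB hAB hBA c d hcd
        have h' : (c • A + d • B) * (c • A + d • B) = 0 := by rw [hcd, zero_mul]
        simp only [add_mul, mul_add, smul_mul_assoc, mul_smul_comm, hA, hB, hAB, hBA] at h'
        have e : (c ^ 2 + d ^ 2) • (1 : Module.End ℝ V) = 0 := by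
          linear_combination (norm := module) -h'
        have e3 : (c ^ 2 + d ^ 2) • v = 0 := by
          simpa using DFunLike.congr_fun e v
        rcases smul_eq_zero.mp e3 with hc | hc
        · constructor <;> nlinarith
        · exact absurd hc hv
      have br3 : ∀ X : V, S X * J3 - J3 * S X = (2 * s2 X) • J1 - (2 * s1 X) • J2 := by
        intro X
        obtain ⟨c1, c2, c3⟩ := hS0 X
        rw [hS X]
        simp only [mul_add, add_mul, smul_mul_assoc, mul_smul_comm,
          h1, h2, h3, h12, h21, h23, h32, h31, h13, c1, c2, c3]
        module
      have br1 : ∀ X : V, S X * J1 - J1 * S X = (2 * s3 X) • J2 - (2 * s2 X) • J3 := by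
        intro X
        obtain ⟨c1, c2, c3⟩ := hS0 X
        rw [hS X]
        simp only [mul_add, add_mul, smul_mul_assoc, mul_smul_comm,
          h1, h2, h3, h12, h21, h23, h32, h31, h13, c1, c2, c3]
        module
      have R3 : ∀ Y : V, s1 Y = s2 (J3 Y) := by
        intro Y
        have E := h 0 0 1 (by norm_num) ((0:ℝ) • J1 + (0:ℝ) • J2 + (1:ℝ) • J3) rfl Y
        simp only [zero_smul, one_smul, zero_add] at E
        rw [br3 Y, br3 (J3 Y)] at E
        simp only [mul_sub, mul_smul_comm, h31, h32] at E
        have E0 : (2 * s1 Y - 2 * s2 (J3 Y)) • J1 + (2 * s2 Y + 2 * s1 (J3 Y)) • J2 = 0 := by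
          linear_combination (norm := module) E
        have := (indep J1 J2 J3 h1 h2 h12 h21 _ _ E0).1
        linarith
      have R1 : ∀ Y : V, s2 Y = s3 (J1 Y) := by
        intro Y
        have E := h 1 0 0 (by norm_num) ((1:ℝ) • J1 + (0:ℝ) • J2 + (0:ℝ) • J3) rfl Y
        simp only [zero_smul, one_smul, zero_add, add_zero] at E
        rw [br1 Y, br1 (J1 Y)] at E
        simp only [mul_sub, mul_smul_comm, h12, h13] at E
        have E0 : (2 * s2 Y - 2 * s3 (J1 Y)) • J2 + (2 * s3 Y + 2 * s2 (J1 Y)) • J3 = 0 := by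
          linear_combination (norm := module) E
        have := (indep J2 J3 J1 h2 h3 h23 h32 _ _ E0).1
        linarith
      constructor
      · rw [R3 (J1 X), j31 X]
      · rw [R1 (J2 X), j12 X]
  · -- backward direction
    intro hc a1 a2 a3 _ J hJ Y
    subst hJ
    have o12 : ∀ X : V, s1 (J2 X) = s3 X := fun X => by
      have := ((hc (-(J3 X))).1).trans ((hc (-(J3 X))).2)
      simpa [map_neg, j13, j33] using this
    have o13 : ∀ X : V, s1 (J3 X) = -s2 X := fun X => by
      have := (hc (J2 X)).1
      simpa [j12, j22] using this
    have o21 : ∀ X : V, s2 (J1 X) = -s3 X := fun X => by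
      have := (hc (J3 X)).2
      simpa [j23, j33] using this
    have o23 : ∀ X : V, s2 (J3 X) = s1 X := fun X => by
      have := (hc (-(J1 X))).1
      simpa [map_neg, j11, j21] using this.symm
    have o32 : ∀ X : V, s3 (J2 X) = -s1 X := fun X => by
      have := ((hc (J1 X)).1).trans ((hc (J1 X)).2)
      simpa [j11, j31] using this.symm
    have d2 : s2 (J2 Y) = s1 (J1 Y) := ((hc Y).1).symm
    have d3 : s3 (J3 Y) = s1 (J1 Y) := (((hc Y).1).trans ((hc Y).2)).symm
    have t1 : s1 ((a1 • J1 + a2 • J2 + a3 • J3) Y)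
        = a1 * s1 (J1 Y) + a2 * s3 Y - a3 * s2 Y := by
      simp only [LinearMap.add_apply, LinearMap.smul_apply, map_add, map_smul, smul_eq_mul,
        o12, o13]
      ring
    have t2 : s2 ((a1 • J1 + a2 • J2 + a3 • J3) Y)
        = -(a1 * s3 Y) + a2 * s1 (J1 Y) + a3 * s1 Y := by
      simp only [LinearMap.add_apply, LinearMap.smul_apply, map_add, map_smul, smul_eq_mul,
        o21, o23, d2]
      ring
    have t3 : s3 ((a1 • J1 + a2 • J2 + a3 • J3) Y)
        = a1 * s2 Y - a2 * s1 Y + a3 * s1 (J1 Y) := by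
      have o31 : s3 (J1 Y) = s2 Y := by
        have := (hc (-(J2 Y))).2
        simpa [map_neg, j22, j32] using this.symm
      simp only [LinearMap.add_apply, LinearMap.smul_apply, map_add, map_smul, smul_eq_mul,
        o31, o32, d3]
      ring
    rw [brackS a1 a2 a3 Y, brackS a1 a2 a3 ((a1 • J1 + a2 • J2 + a3 • J3) Y), t1, t2, t3]
    simp only [mul_add, add_mul, smul_mul_assoc, mul_smul_comm,
      h1, h2, h3, h12, h21, h23, h32, h31, h13]
    match_scalars <;> ring
end

section
/- With notation as above, the identity J[S_Y, J] = -[S_{JY}, J] for all Y ∈ V and all J = a1J1+a2J2+a3J3 with a1²+a2²+a3²=1 holds if and only if s¹ = s² = s³ = 0. -/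
section Aux

variable {V : Type*} [AddCommGroup V] [Module ℝ V]

/-- `Ja • [T + a•Ja + b•Jb + c•Jc, Ja]` when `T` commutes with `Ja`. -/
lemma aux_comm (Ja Jb Jc T : Module.End ℝ V)
    (haa : Ja * Ja = -1)
    (hba : Jb * Ja = -Jc) (hab : Ja * Jb = Jc)
    (hca : Jc * Ja = Jb) (hac : Ja * Jc = -Jb)
    (hT : T * Ja = Ja * T) (a b c : ℝ) :
    (T + a • Ja + b • Jb + c • Jc) * Ja - Ja * (T + a • Ja + b • Jb + c • Jc)
      = (-(2*b)) • Jc + (2*c) • Jb := by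
  simp only [add_mul, mul_add, smul_mul_assoc, mul_smul_comm, haa, hab, hba, hca, hac, hT]
  module

/-- From `β•Jb + α•Jc = 0` and a nonzero vector, conclude `β = 0 ∧ α = 0`. -/
lemma aux_key (Ja Jb Jc : Module.End ℝ V)
    (hbb : Jb * Jb = -1) (hcc : Jc * Jc = -1)
    (hbc : Jb * Jc = Ja) (hcb : Jc * Jb = -Ja)
    {α β : ℝ} (hE : β • Jb + α • Jc = 0) {v : V} (hv : v ≠ 0) :
    β = 0 ∧ α = 0 := by
  have e2 := LinearMap.congr_fun hE (Jc v)
  have e3 := LinearMap.congr_fun hE (Jb v)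
  simp only [LinearMap.add_apply, LinearMap.smul_apply, LinearMap.zero_apply] at e2 e3
  rw [show Jb (Jc v) = (Jb * Jc) v from rfl, show Jc (Jc v) = (Jc * Jc) v from rfl,
    hbc, hcc] at e2
  rw [show Jb (Jb v) = (Jb * Jb) v from rfl, show Jc (Jb v) = (Jc * Jb) v from rfl,
    hbb, hcb] at e3
  simp only [LinearMap.neg_apply, Module.End.one_apply, smul_neg] at e2 e3
  have h2 : β • Ja v = α • v := by rwa [← sub_eq_add_neg, sub_eq_zero] at e2
  have h3 : α • Ja v = -(β • v) := by
    have := e3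
    rw [add_comm, ← sub_eq_add_neg, sub_eq_zero] at this
    exact neg_eq_iff_eq_neg.mp this
  have t1 : α • (β • Ja v) = (α*α) • v := by rw [h2, smul_smul]
  have t2 : α • (β • Ja v) = -((β*β) • v) := by
    rw [smul_comm, h3, smul_neg, smul_smul]
  have key : (α*α + β*β) • v = 0 := by
    rw [add_smul, t1.symm.trans t2, neg_add_cancel]
  have hz : α*α + β*β = 0 := (smul_eq_zero.mp key).resolve_right hv
  constructor <;> nlinarith [sq_nonneg α, sq_nonneg β]

end Aux

/-- With `S_X = S⁰_X + s¹(X)J1 + s²(X)J2 + s³(X)J3`, `[S⁰_X, Ja] = 0`, the identity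
`J[S_Y,J] = -[S_{JY},J]` holds for all `Y` and all unit imaginary `J`
iff `s¹ = s² = s³ = 0`. -/
theorem stmt_9 {V : Type*} [AddCommGroup V] [Module ℝ V]
    (J1 J2 J3 : Module.End ℝ V)
    (h1 : J1 * J1 = -1) (h2 : J2 * J2 = -1) (h3 : J3 * J3 = -1)
    (h12 : J1 * J2 = J3) (h21 : J2 * J1 = -J3)
    (h23 : J2 * J3 = J1) (h32 : J3 * J2 = -J1)
    (h31 : J3 * J1 = J2) (h13 : J1 * J3 = -J2)
    (S S0 : V → Module.End ℝ V)
    (s1 s2 s3 : V →ₗ[ℝ] ℝ)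
    (hS : ∀ X, S X = S0 X + s1 X • J1 + s2 X • J2 + s3 X • J3)
    (hS0 : ∀ X, S0 X * J1 = J1 * S0 X ∧ S0 X * J2 = J2 * S0 X ∧ S0 X * J3 = J3 * S0 X) :
    (∀ a1 a2 a3 : ℝ, a1 ^ 2 + a2 ^ 2 + a3 ^ 2 = 1 →
      ∀ J : Module.End ℝ V, J = a1 • J1 + a2 • J2 + a3 • J3 →
        ∀ Y : V, J * (S Y * J - J * S Y) = -(S (J Y) * J - J * S (J Y))) ↔
    (s1 = 0 ∧ s2 = 0 ∧ s3 = 0) := by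
  constructor
  · intro h
    by_cases hV : ∃ v : V, v ≠ 0
    · obtain ⟨v, hv⟩ := hV
      have hS' : ∀ X, S X = S0 X + s2 X • J2 + s3 X • J3 + s1 X • J1 := by
        intro X; rw [hS X]; module
      have hS'' : ∀ X, S X = S0 X + s3 X • J3 + s1 X • J1 + s2 X • J2 := by
        intro X; rw [hS X]; module
      have e1 : ∀ Y : V, (s2 Y + s3 (J1 Y)) = 0 ∧ (s3 Y - s2 (J1 Y)) = 0 := by
        intro Y
        have E := h 1 0 0 (by norm_num) J1 (by module) Y
        rw [hS Y, hS (J1 Y),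
          aux_comm J1 J2 J3 (S0 Y) h1 h21 h12 h31 h13 (hS0 Y).1,
          aux_comm J1 J2 J3 (S0 (J1 Y)) h1 h21 h12 h31 h13 (hS0 (J1 Y)).1] at E
        rw [mul_add, mul_smul_comm, mul_smul_comm, h13, h12] at E
        have hE : (2*(s2 Y + s3 (J1 Y))) • J2 + (2*(s3 Y - s2 (J1 Y))) • J3 = 0 := by
          linear_combination (norm := module) E
        have := aux_key J1 J2 J3 h2 h3 h23 h32 hE hv
        constructor <;> linarith [this.1, this.2]
      have e2 : ∀ Y : V, (s3 Y + s1 (J2 Y)) = 0 ∧ (s1 Y - s3 (J2 Y)) = 0 := by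
        intro Y
        have E := h 0 1 0 (by norm_num) J2 (by module) Y
        rw [hS' Y, hS' (J2 Y),
          aux_comm J2 J3 J1 (S0 Y) h2 h32 h23 h12 h21 (hS0 Y).2.1,
          aux_comm J2 J3 J1 (S0 (J2 Y)) h2 h32 h23 h12 h21 (hS0 (J2 Y)).2.1] at E
        rw [mul_add, mul_smul_comm, mul_smul_comm, h21, h23] at E
        have hE : (2*(s3 Y + s1 (J2 Y))) • J3 + (2*(s1 Y - s3 (J2 Y))) • J1 = 0 := by
          linear_combination (norm := module) E
        have := aux_key J2 J3 J1 h3 h1 h31 h13 hE hv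
        constructor <;> linarith [this.1, this.2]
      have e3 : ∀ Y : V, (s1 Y + s2 (J3 Y)) = 0 ∧ (s2 Y - s1 (J3 Y)) = 0 := by
        intro Y
        have E := h 0 0 1 (by norm_num) J3 (by module) Y
        rw [hS'' Y, hS'' (J3 Y),
          aux_comm J3 J1 J2 (S0 Y) h3 h13 h31 h23 h32 (hS0 Y).2.2,
          aux_comm J3 J1 J2 (S0 (J3 Y)) h3 h13 h31 h23 h32 (hS0 (J3 Y)).2.2] at E
        rw [mul_add, mul_smul_comm, mul_smul_comm, h32, h31] at E
        have hE : (2*(s1 Y + s2 (J3 Y))) • J1 + (2*(s2 Y - s1 (J3 Y))) • J2 = 0 := by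
          linear_combination (norm := module) E
        have := aux_key J3 J1 J2 h1 h2 h12 h21 hE hv
        constructor <;> linarith [this.1, this.2]
      have hs1 : ∀ Y : V, s1 Y = 0 := by
        intro Y
        have a2 := (e2 Y).2
        have a1 := (e1 (J2 Y)).2
        have a3 := (e3 Y).1
        have hJ : J1 (J2 Y) = J3 Y := by
          have := LinearMap.congr_fun h12 Y
          rwa [Module.End.mul_apply] at this
        rw [hJ] at a1
        linarith
      have hs2 : ∀ Y : V, s2 Y = 0 := by
        intro Y
        have := (e3 Y).2
        rw [hs1 (J3 Y)] at this
        linarith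
      have hs3 : ∀ Y : V, s3 Y = 0 := by
        intro Y
        have := (e2 Y).1
        rw [hs1 (J2 Y)] at this
        linarith
      exact ⟨LinearMap.ext hs1, LinearMap.ext hs2, LinearMap.ext hs3⟩
    · push_neg at hV
      refine ⟨?_, ?_, ?_⟩ <;> ext Y <;> rw [hV Y] <;> simp
  · rintro ⟨hz1, hz2, hz3⟩ a1 a2 a3 _ J hJ Y
    have hSY : ∀ X, S X = S0 X := by
      intro X; rw [hS X, hz1, hz2, hz3]; simp
    have hcomm : ∀ X, S0 X * J = J * S0 X := by
      intro X
      obtain ⟨c1, c2, c3⟩ := hS0 X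
      rw [hJ]
      simp only [mul_add, add_mul, mul_smul_comm, smul_mul_assoc, c1, c2, c3]
    rw [hSY, hSY, hcomm, hcomm]; simp
end

section
/- With ∇' = ∇ + S as above, (T^{∇'})^{0,2}_{J3} = (T^{∇})^{0,2}_{J3} if and only if s¹(J1X) = s²(J2X) for all X (assuming dim V ≥ 4, i.e., V is a nonzero quaternionic module). -/
/-- With `∇' = ∇ + S` as above, `(T^{∇'})^{0,2}_{J3} = (T^{∇})^{0,2}_{J3}` iff
`s¹(J1X) = s²(J2X)` for all `X` (on a nonzero quaternionic module). -/
theorem stmt_11 {V : Type*} [AddCommGroup V] [Module ℝ V] [Nontrivial V]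
    (J1 J2 J3 : Module.End ℝ V)
    (h1 : J1 * J1 = -1) (h2 : J2 * J2 = -1) (h3 : J3 * J3 = -1)
    (h12 : J1 * J2 = J3) (h21 : J2 * J1 = -J3)
    (h23 : J2 * J3 = J1) (h32 : J3 * J2 = -J1)
    (h31 : J3 * J1 = J2) (h13 : J1 * J3 = -J2)
    (S S0 : V → Module.End ℝ V)
    (s1 s2 s3 : V →ₗ[ℝ] ℝ)
    (hS : ∀ X, S X = S0 X + s1 X • J1 + s2 X • J2 + s3 X • J3)
    (hS0 : ∀ X, S0 X * J1 = J1 * S0 X ∧ S0 X * J2 = J2 * S0 X ∧ S0 X * J3 = J3 * S0 X)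
    (T T' : V → V → V)
    (hTalt : ∀ X Y, T X Y = -T Y X)
    (hTT' : ∀ X Y, T' X Y = T X Y + S X Y - S Y X) :
    (∀ X Y,
      (1 / 4 : ℝ) • (T' (J3 X) (J3 Y) - T' X Y - J3 (T' (J3 X) Y) - J3 (T' X (J3 Y)))
      = (1 / 4 : ℝ) • (T (J3 X) (J3 Y) - T X Y - J3 (T (J3 X) Y) - J3 (T X (J3 Y)))) ↔
    (∀ X, s1 (J1 X) = s2 (J2 X)) := by
  -- pointwise versions of the quaternionic relations
  have pt : ∀ (A B C : Module.End ℝ V), A * B = C → ∀ v, A (B v) = C v := by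
    intro A B C h v
    have := LinearMap.congr_fun h v
    simpa [Module.End.mul_apply] using this
  have j11 : ∀ v, J1 (J1 v) = -v := by
    intro v; have := LinearMap.congr_fun h1 v
    simpa [Module.End.mul_apply] using this
  have j22 : ∀ v, J2 (J2 v) = -v := by
    intro v; have := LinearMap.congr_fun h2 v
    simpa [Module.End.mul_apply] using this
  have j33 : ∀ v, J3 (J3 v) = -v := by
    intro v; have := LinearMap.congr_fun h3 v
    simpa [Module.End.mul_apply] using this
  have j12 : ∀ v, J1 (J2 v) = J3 v := pt _ _ _ h12
  have j23 : ∀ v, J2 (J3 v) = J1 v := pt _ _ _ h23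
  have j31 : ∀ v, J3 (J1 v) = J2 v := pt _ _ _ h31
  have j21 : ∀ v, J2 (J1 v) = -(J3 v) := by
    intro v; have := LinearMap.congr_fun h21 v
    simpa [Module.End.mul_apply] using this
  have j32 : ∀ v, J3 (J2 v) = -(J1 v) := by
    intro v; have := LinearMap.congr_fun h32 v
    simpa [Module.End.mul_apply] using this
  have j13 : ∀ v, J1 (J3 v) = -(J2 v) := by
    intro v; have := LinearMap.congr_fun h13 v
    simpa [Module.End.mul_apply] using this
  have c3 : ∀ X v, J3 (S0 X v) = S0 X (J3 v) := by
    intro X v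
    have := LinearMap.congr_fun (hS0 X).2.2 v
    simpa [Module.End.mul_apply] using this.symm
  -- key expansion
  have key : ∀ X Y,
      T' (J3 X) (J3 Y) - T' X Y - J3 (T' (J3 X) Y) - J3 (T' X (J3 Y))
      = T (J3 X) (J3 Y) - T X Y - J3 (T (J3 X) Y) - J3 (T X (J3 Y))
        + ((2 * (s2 (J3 X) - s1 X)) • J1 Y + (2 * (-(s2 X) - s1 (J3 X))) • J2 Y
           - (2 * (s2 (J3 Y) - s1 Y)) • J1 X - (2 * (-(s2 Y) - s1 (J3 Y))) • J2 X) := by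
    intro X Y
    simp only [hTT', hS, LinearMap.add_apply, LinearMap.smul_apply, map_add, map_sub,
      map_smul, map_neg, c3, j11, j22, j33, j12, j23, j31, j21, j32, j13]
    module
  constructor
  · intro h X
    -- derive vanishing of the extra term
    have hz : ∀ X Y : V,
        (2 * (s2 (J3 X) - s1 X)) • J1 Y + (2 * (-(s2 X) - s1 (J3 X))) • J2 Y
          - (2 * (s2 (J3 Y) - s1 Y)) • J1 X - (2 * (-(s2 Y) - s1 (J3 Y))) • J2 X = 0 := by
      intro X Y
      have hXY := h X Y
      rw [key] at hXY
      have h4 : (1 / 4 : ℝ) ≠ 0 := by norm_num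
      have := smul_right_injective V h4 hXY
      -- this : T ... + E = T ...
      exact add_eq_left.mp this
    -- use linear independence of X, J1 X, J2 X, J3 X
    by_cases hX : X = 0
    · simp [hX]
    · have hspec := hz X (J1 X)
      simp only [j11, j21, j31, map_neg, smul_neg] at hspec
      -- hspec : -c1 • X - c2 • J3 X - c3' • J1 X - c4 • J2 X = 0 (roughly)
      set c : ℝ := 2 * (s2 (J3 X) - s1 X) with hc
      set d : ℝ := 2 * (s2 (J2 X) - s1 (J1 X)) with hd
      set e : ℝ := 2 * (-(s2 (J1 X)) - s1 (J2 X)) with he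
      set f : ℝ := 2 * (-(s2 X) - s1 (J3 X)) with hf
      have heq : (-c) • X + (-d) • J1 X + (-e) • J2 X + (-f) • J3 X = 0 := by
        rw [← hspec]; module
      -- conjugate trick
      have expand : (-c) • ((-c) • X + (-d) • J1 X + (-e) • J2 X + (-f) • J3 X)
          - (-d) • J1 ((-c) • X + (-d) • J1 X + (-e) • J2 X + (-f) • J3 X)
          - (-e) • J2 ((-c) • X + (-d) • J1 X + (-e) • J2 X + (-f) • J3 X)
          - (-f) • J3 ((-c) • X + (-d) • J1 X + (-e) • J2 X + (-f) • J3 X)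
          = (c^2 + d^2 + e^2 + f^2) • X := by
        simp only [map_add, map_smul, map_neg, j11, j22, j33, j12, j23, j31, j21, j32, j13]
        module
      rw [heq] at expand
      simp only [smul_zero, map_zero, sub_zero, zero_sub, neg_zero] at expand
      have hsum : c^2 + d^2 + e^2 + f^2 = 0 := by
        by_contra hne
        exact hX (by
          have := smul_eq_zero.mp expand.symm
          tauto)
      have hd0 : d = 0 := by nlinarith [sq_nonneg c, sq_nonneg d, sq_nonneg e, sq_nonneg f]
      have : s2 (J2 X) - s1 (J1 X) = 0 := by
        have : (2:ℝ) * (s2 (J2 X) - s1 (J1 X)) = 0 := hd0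
        linarith
      linarith
  · intro h X Y
    have e1 : ∀ Z : V, s2 (J3 Z) = s1 Z := by
      intro Z
      have := h (J1 Z)
      simp only [j11, j21, map_neg] at this
      linarith
    have e2 : ∀ Z : V, s1 (J3 Z) = -(s2 Z) := by
      intro Z
      have := e1 (J3 Z)
      simp only [j33, map_neg] at this
      linarith
    rw [key]
    rw [e1 X, e1 Y, e2 X, e2 Y]
    ring_nf
    simp
end

section
/- Let R : V × V → End(V) be an alternating bilinear curvature-type map satisfying [R(X,Y), Ja] = -A_b(X,Y)Jc + A_c(X,Y)Jb for 2-forms A_1,A_2,A_3 (cyclic (a,b,c)). Define ρ_a(X,Y) = -(1/2)Tr(Z ↦ Ja R(X,Y)Z). If moreover R(X,Y) = R'(X,Y) + (1/(2n))(ρ_1(X,Y)J1 + ρ_2(X,Y)J2 + ρ_3(X,Y)J3) with [R'(X,Y), Ja] = 0, then A_a = (1/n)·ρ_a for a = 1,2,3, where dim V = 4n. -/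
lemma stmt_12_aux {V : Type*} [AddCommGroup V] [Module ℝ V] [FiniteDimensional ℝ V]
    (n : ℝ) (hn : n ≠ 0)
    (Ja Jb Jc Rxy : Module.End ℝ V) (A B ρc : ℝ)
    (hab : Ja * Jb = Jc) (hba : Jb * Ja = -Jc)
    (hbb : LinearMap.trace ℝ V (Jb * Jb) = -(4 * n))
    (hbc : LinearMap.trace ℝ V (Jb * Jc) = 0)
    (hρc : ρc = -(1 / 2 : ℝ) * LinearMap.trace ℝ V (Jc * Rxy))
    (hA : Rxy * Ja - Ja * Rxy = -A • Jc + B • Jb) :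
    B = (1 / n) * ρc := by
  have h := congrArg (fun E => LinearMap.trace ℝ V (Jb * E)) hA
  simp only [mul_sub, mul_add, map_sub, map_add, Algebra.mul_smul_comm, map_smul,
    smul_eq_mul] at h
  have e1 : LinearMap.trace ℝ V (Jb * (Rxy * Ja)) = LinearMap.trace ℝ V (Jc * Rxy) := by
    rw [← mul_assoc, LinearMap.trace_mul_comm, ← mul_assoc, hab]
  have e2 : LinearMap.trace ℝ V (Jb * (Ja * Rxy)) = -LinearMap.trace ℝ V (Jc * Rxy) := by
    rw [← mul_assoc, hba, neg_mul, map_neg]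
  rw [e1, e2, hbb, hbc] at h
  have hTr : LinearMap.trace ℝ V (Jc * Rxy) = -2 * ρc := by rw [hρc]; ring
  rw [hTr] at h
  field_simp
  linarith

/-- If `[R(X,Y), Ja] = -A_b(X,Y)Jc + A_c(X,Y)Jb` (cyclic `(a,b,c)`) and
`R(X,Y) = R'(X,Y) + (1/(2n))(ρ_1 J1 + ρ_2 J2 + ρ_3 J3)` with `[R'(X,Y), Ja] = 0`,
where `ρ_a(X,Y) = -(1/2)Tr(Z ↦ Ja R(X,Y)Z)` and `dim V = 4n`, then `A_a = (1/n)ρ_a`. -/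
theorem stmt_12 {V : Type*} [AddCommGroup V] [Module ℝ V] [FiniteDimensional ℝ V]
    (n : ℕ) (hn : 0 < n) (hdim : Module.finrank ℝ V = 4 * n)
    (J1 J2 J3 : Module.End ℝ V)
    (h1 : J1 * J1 = -1) (h2 : J2 * J2 = -1) (h3 : J3 * J3 = -1)
    (h12 : J1 * J2 = J3) (h21 : J2 * J1 = -J3)
    (h23 : J2 * J3 = J1) (h32 : J3 * J2 = -J1)
    (h31 : J3 * J1 = J2) (h13 : J1 * J3 = -J2)
    (R R' : V → V → Module.End ℝ V)
    (hRalt : ∀ X Y, R X Y = -R Y X)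
    (A1 A2 A3 ρ1 ρ2 ρ3 : V → V → ℝ)
    (hρ1 : ∀ X Y, ρ1 X Y = -(1 / 2 : ℝ) * LinearMap.trace ℝ V (J1 * R X Y))
    (hρ2 : ∀ X Y, ρ2 X Y = -(1 / 2 : ℝ) * LinearMap.trace ℝ V (J2 * R X Y))
    (hρ3 : ∀ X Y, ρ3 X Y = -(1 / 2 : ℝ) * LinearMap.trace ℝ V (J3 * R X Y))
    (hA1 : ∀ X Y, R X Y * J1 - J1 * R X Y = -(A2 X Y) • J3 + (A3 X Y) • J2)
    (hA2 : ∀ X Y, R X Y * J2 - J2 * R X Y = -(A3 X Y) • J1 + (A1 X Y) • J3)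
    (hA3 : ∀ X Y, R X Y * J3 - J3 * R X Y = -(A1 X Y) • J2 + (A2 X Y) • J1)
    (hdec : ∀ X Y, R X Y = R' X Y +
      ((1 : ℝ) / (2 * (n : ℝ))) • (ρ1 X Y • J1 + ρ2 X Y • J2 + ρ3 X Y • J3))
    (hR' : ∀ X Y, R' X Y * J1 = J1 * R' X Y ∧ R' X Y * J2 = J2 * R' X Y ∧
      R' X Y * J3 = J3 * R' X Y) :
    ∀ X Y, A1 X Y = (1 / (n : ℝ)) * ρ1 X Y ∧ A2 X Y = (1 / (n : ℝ)) * ρ2 X Y ∧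
      A3 X Y = (1 / (n : ℝ)) * ρ3 X Y := by
  have hn' : (n : ℝ) ≠ 0 := Nat.cast_ne_zero.mpr hn.ne'
  -- traces of the Ja vanish
  have tr1 : LinearMap.trace ℝ V J1 = 0 := by
    have h := LinearMap.trace_mul_comm ℝ J2 J3
    rw [h23, h32, map_neg] at h
    linarith
  have tr2 : LinearMap.trace ℝ V J2 = 0 := by
    have h := LinearMap.trace_mul_comm ℝ J3 J1
    rw [h31, h13, map_neg] at h
    linarith
  have tr3 : LinearMap.trace ℝ V J3 = 0 := by
    have h := LinearMap.trace_mul_comm ℝ J1 J2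
    rw [h12, h21, map_neg] at h
    linarith
  have trone : LinearMap.trace ℝ V 1 = (4 * n : ℝ) := by
    rw [LinearMap.trace_one, hdim]; push_cast; ring
  have tr11 : LinearMap.trace ℝ V (J1 * J1) = -(4 * (n : ℝ)) := by
    rw [h1, map_neg, trone]
  have tr22 : LinearMap.trace ℝ V (J2 * J2) = -(4 * (n : ℝ)) := by
    rw [h2, map_neg, trone]
  have tr33 : LinearMap.trace ℝ V (J3 * J3) = -(4 * (n : ℝ)) := by
    rw [h3, map_neg, trone]
  intro X Y
  refine ⟨?_, ?_, ?_⟩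
  · exact stmt_12_aux (n : ℝ) hn' J2 J3 J1 (R X Y) (A3 X Y) (A1 X Y) (ρ1 X Y)
      h23 h32 tr33 (by rw [h31]; exact tr2) (hρ1 X Y) (hA2 X Y)
  · exact stmt_12_aux (n : ℝ) hn' J3 J1 J2 (R X Y) (A1 X Y) (A2 X Y) (ρ2 X Y)
      h31 h13 tr11 (by rw [h12]; exact tr3) (hρ2 X Y) (hA3 X Y)
  · exact stmt_12_aux (n : ℝ) hn' J1 J2 J3 (R X Y) (A2 X Y) (A3 X Y) (ρ3 X Y)
      h12 h21 tr22 (by rw [h23]; exact tr1) (hρ3 X Y) (hA1 X Y)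
end

section
/- Let V be a 4n-dimensional real vector space with quaternionic structure J1,J2,J3 and let R(X,Y) ∈ End(V) be alternating bilinear with [R(X,Y),Ja] = -(1/n)ρ_b(X,Y)Jc + (1/n)ρ_c(X,Y)Jb for all cyclic (a,b,c), where ρ_a(X,Y) := -(1/2)Tr(Z ↦ JaR(X,Y)Z). Then R admits a unique decomposition R(X,Y) = R'(X,Y) + (1/(2n))(ρ_1(X,Y)J1 + ρ_2(X,Y)J2 + ρ_3(X,Y)J3) with [R'(X,Y), Ja] = 0 for a = 1,2,3. -/
/-- If `[R(X,Y), Ja] = -(1/n)ρ_b(X,Y)Jc + (1/n)ρ_c(X,Y)Jb` (cyclic `(a,b,c)`),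
where `ρ_a(X,Y) = -(1/2)Tr(Z ↦ Ja R(X,Y)Z)` and `dim V = 4n`, then `R` admits a
unique decomposition `R = R' + (1/(2n))(ρ_1 J1 + ρ_2 J2 + ρ_3 J3)` with
`[R'(X,Y), Ja] = 0`. -/
theorem stmt_13 {V : Type*} [AddCommGroup V] [Module ℝ V] [FiniteDimensional ℝ V]
    (n : ℕ) (hn : 0 < n) (hdim : Module.finrank ℝ V = 4 * n)
    (J1 J2 J3 : Module.End ℝ V)
    (h1 : J1 * J1 = -1) (h2 : J2 * J2 = -1) (h3 : J3 * J3 = -1)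
    (h12 : J1 * J2 = J3) (h21 : J2 * J1 = -J3)
    (h23 : J2 * J3 = J1) (h32 : J3 * J2 = -J1)
    (h31 : J3 * J1 = J2) (h13 : J1 * J3 = -J2)
    (R : V → V → Module.End ℝ V)
    (hRalt : ∀ X Y, R X Y = -R Y X)
    (ρ1 ρ2 ρ3 : V → V → ℝ)
    (hρ1 : ∀ X Y, ρ1 X Y = -(1 / 2 : ℝ) * LinearMap.trace ℝ V (J1 * R X Y))
    (hρ2 : ∀ X Y, ρ2 X Y = -(1 / 2 : ℝ) * LinearMap.trace ℝ V (J2 * R X Y))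
    (hρ3 : ∀ X Y, ρ3 X Y = -(1 / 2 : ℝ) * LinearMap.trace ℝ V (J3 * R X Y))
    (hc1 : ∀ X Y, R X Y * J1 - J1 * R X Y =
      -((1 / (n : ℝ)) * ρ2 X Y) • J3 + ((1 / (n : ℝ)) * ρ3 X Y) • J2)
    (hc2 : ∀ X Y, R X Y * J2 - J2 * R X Y =
      -((1 / (n : ℝ)) * ρ3 X Y) • J1 + ((1 / (n : ℝ)) * ρ1 X Y) • J3)
    (hc3 : ∀ X Y, R X Y * J3 - J3 * R X Y =
      -((1 / (n : ℝ)) * ρ1 X Y) • J2 + ((1 / (n : ℝ)) * ρ2 X Y) • J1) :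
    ∃! R' : V → V → Module.End ℝ V,
      ∀ X Y, R X Y = R' X Y +
          ((1 : ℝ) / (2 * (n : ℝ))) • (ρ1 X Y • J1 + ρ2 X Y • J2 + ρ3 X Y • J3) ∧
        R' X Y * J1 = J1 * R' X Y ∧ R' X Y * J2 = J2 * R' X Y ∧
        R' X Y * J3 = J3 * R' X Y := by

  have hn' : (n : ℝ) ≠ 0 := Nat.cast_ne_zero.mpr hn.ne'
  refine ⟨fun X Y => R X Y -
      ((1 : ℝ) / (2 * (n : ℝ))) • (ρ1 X Y • J1 + ρ2 X Y • J2 + ρ3 X Y • J3), ?_, ?_⟩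
  · intro X Y
    set A := ρ1 X Y • J1 + ρ2 X Y • J2 + ρ3 X Y • J3 with hA
    refine ⟨by module, ?_, ?_, ?_⟩
    · have key : A * J1 - J1 * A = (-2 * ρ2 X Y) • J3 + (2 * ρ3 X Y) • J2 := by
        simp only [hA, add_mul, mul_add, smul_mul_assoc, mul_smul_comm,
          h1, h12, h21, h23, h32, h31, h13]
        module
      have := hc1 X Y
      rw [sub_mul, mul_sub, smul_mul_assoc, mul_smul_comm, sub_eq_sub_iff_sub_eq_sub,
        ← smul_sub, key]
      rw [this]
      match_scalars <;> field_simp <;> ring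
    · have key : A * J2 - J2 * A = (-2 * ρ3 X Y) • J1 + (2 * ρ1 X Y) • J3 := by
        simp only [hA, add_mul, mul_add, smul_mul_assoc, mul_smul_comm,
          h2, h12, h21, h23, h32, h31, h13]
        module
      have := hc2 X Y
      rw [sub_mul, mul_sub, smul_mul_assoc, mul_smul_comm, sub_eq_sub_iff_sub_eq_sub,
        ← smul_sub, key]
      rw [this]
      match_scalars <;> field_simp <;> ring
    · have key : A * J3 - J3 * A = (-2 * ρ1 X Y) • J2 + (2 * ρ2 X Y) • J1 := by
        simp only [hA, add_mul, mul_add, smul_mul_assoc, mul_smul_comm,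
          h3, h12, h21, h23, h32, h31, h13]
        module
      have := hc3 X Y
      rw [sub_mul, mul_sub, smul_mul_assoc, mul_smul_comm, sub_eq_sub_iff_sub_eq_sub,
        ← smul_sub, key]
      rw [this]
      match_scalars <;> field_simp <;> ring
  · intro R' hR'
    funext X Y
    have h := (hR' X Y).1
    rw [h]
    abel
end
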